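/- Let A ∈ [0,1], γ ∈ [0,1], and let |ψ⟩ = √((1+A)/2)|01⟩ + i√((1−A)/2)|10⟩ be a dual-rail two-qubit state with density matrix ρ = |ψ⟩⟨ψ|. Let ε = ε_AD ⊗ ε_AD, where ε_AD is the single-qubit amplitude damping channel with Kraus operators M₀ = diag(1, √(1−γ)) and M₁ = [[0, √γ],[0,0]]; that is, ε has the four Kraus operators Mₐ ⊗ M_b, a,b ∈ {0,1}. Then F_{l₁}(ρ) − F_{l₁}(ε(ρ)) = F_R(ρ) − F_R(ε(ρ)) = γ·√(1−A²). -/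

import Mathlib

open Matrix Kronecker BigOperators
open scoped ComplexOrder

noncomputable section

/-- A density matrix: positive semidefinite with trace 1. -/
def IsDensityMatrix {n : Type*} [Fintype n] [DecidableEq n] (ρ : Matrix n n ℂ) : Prop :=
  ρ.PosSemidef ∧ ρ.trace = 1

/-- The l₁-norm imaginarity measure: sum of |Im ρᵢⱼ| over off-diagonal entries. -/
noncomputable def Fl1 {n : Type*} [Fintype n] [DecidableEq n] (ρ : Matrix n n ℂ) : ℝ :=
  ∑ i, ∑ j, if i = j then 0 else |(ρ i j).im|

/-- The trace norm ‖M‖₁ = Tr √(M†M). -/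
noncomputable def traceNorm {n : Type*} [Fintype n] [DecidableEq n] (M : Matrix n n ℂ) : ℝ :=
  (((Matrix.posSemidef_conjTranspose_mul_self M).1.eigenvectorUnitary : Matrix n n ℂ) *
      diagonal (((↑) : ℝ → ℂ) ∘ (Real.sqrt ·) ∘ (Matrix.posSemidef_conjTranspose_mul_self M).1.eigenvalues) *
      (star (Matrix.posSemidef_conjTranspose_mul_self M).1.eigenvectorUnitary : Matrix n n ℂ)).trace.re

/-- The robustness of imaginarity: (1/2)‖ρ − ρᵀ‖₁. -/
noncomputable def FR {n : Type*} [Fintype n] [DecidableEq n] (ρ : Matrix n n ℂ) : ℝ :=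
  traceNorm (ρ - ρᵀ) / 2

/-- Von Neumann entropy (base-2), via eigenvalues of a Hermitian matrix
(junk value 0 if not Hermitian). -/
noncomputable def vnEntropy {n : Type*} [Fintype n] [DecidableEq n] (σ : Matrix n n ℂ) : ℝ :=
  if h : σ.IsHermitian then -∑ j, (h.eigenvalues j) * Real.logb 2 (h.eigenvalues j) else 0

/-- The relative entropy of imaginarity: S(Re ρ) − S(ρ), Re ρ = (ρ + ρᵀ)/2. -/
noncomputable def Fr {n : Type*} [Fintype n] [DecidableEq n] (ρ : Matrix n n ℂ) : ℝ :=
  vnEntropy ((1/2 : ℂ) • (ρ + ρᵀ)) - vnEntropy ρ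

/-- The canonical single-qubit state ρ_A. -/
noncomputable def rhoA (A : ℝ) : Matrix (Fin 2) (Fin 2) ℂ :=
  !![(((1 + A) / 2 : ℝ) : ℂ), -(Complex.I / 2) * (Real.sqrt (1 - A ^ 2) : ℂ);
     (Complex.I / 2) * (Real.sqrt (1 - A ^ 2) : ℂ), (((1 - A) / 2 : ℝ) : ℂ)]

/-- Density matrix of the maximal imaginary state |+⟩ = (|0⟩ + i|1⟩)/√2. -/
noncomputable def Mplus : Matrix (Fin 2) (Fin 2) ℂ :=
  (1/2 : ℂ) • !![1, -Complex.I; Complex.I, 1]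

/-- The dual-rail two-qubit state √((1+A)/2)|01⟩ + i√((1−A)/2)|10⟩. -/
noncomputable def dualRail (A : ℝ) : Fin 2 × Fin 2 → ℂ := fun q =>
  if q = ((0 : Fin 2), (1 : Fin 2)) then (Real.sqrt ((1 + A) / 2) : ℂ)
  else if q = ((1 : Fin 2), (0 : Fin 2)) then Complex.I * (Real.sqrt ((1 - A) / 2) : ℂ)
  else 0

/-- Single-qubit amplitude damping Kraus operators. -/
noncomputable def adKraus (γ : ℝ) : Fin 2 → Matrix (Fin 2) (Fin 2) ℂ :=
  ![!![1, 0; 0, (Real.sqrt (1 - γ) : ℂ)], !![0, (Real.sqrt γ : ℂ); 0, 0]]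

/-- The two-qubit channel ε_AD ⊗ ε_AD. -/
noncomputable def adTensor (γ : ℝ) (ρ : Matrix (Fin 2 × Fin 2) (Fin 2 × Fin 2) ℂ) :
    Matrix (Fin 2 × Fin 2) (Fin 2 × Fin 2) ℂ :=
  ∑ a : Fin 2, ∑ b : Fin 2,
    (adKraus γ a ⊗ₖ adKraus γ b) * ρ * (adKraus γ a ⊗ₖ adKraus γ b)ᴴ

/-! On states supported on span{|01⟩, |10⟩}, `ε_AD ⊗ ε_AD` acts as `ρ ↦ (1 - γ) ρ + γ |00⟩⟨00|`.
Both imaginarity measures are blind to diagonal terms and absolutely homogeneous under real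
scalars, so each shrinks by the factor `1 - γ`. Off the diagonal the dual-rail state is
`√(1 - A²)/2` times a Pauli `Y` on that span, whose `F_{l₁}` and `F_R` both equal `2`. -/

open scoped MatrixOrder

section ImaginarityMeasures

variable {n : Type*} [Fintype n] [DecidableEq n]

theorem traceNorm_eq_re_trace_sqrt (M : Matrix n n ℂ) :
    traceNorm M = (CFC.sqrt (Mᴴ * M)).trace.re := by
  have hM := posSemidef_conjTranspose_mul_self M
  rw [CFC.sqrt_eq_real_sqrt _ (nonneg_iff_posSemidef.mpr hM), cfcₙ_eq_cfc, hM.1.cfc_eq,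
    IsHermitian.cfc, Unitary.conjStarAlgAut_apply]
  rfl

theorem traceNorm_eq_re_trace {M D : Matrix n n ℂ} (hD : D.PosSemidef) (hMD : Mᴴ * M = D * D) :
    traceNorm M = D.trace.re := by
  rw [traceNorm_eq_re_trace_sqrt, hMD, CFC.sqrt_mul_self D (nonneg_iff_posSemidef.mpr hD)]

theorem traceNorm_real_smul (c : ℝ) (M : Matrix n n ℂ) :
    traceNorm ((c : ℂ) • M) = |c| * traceNorm M := by
  have hM : 0 ≤ Mᴴ * M := nonneg_iff_posSemidef.mpr (posSemidef_conjTranspose_mul_self M)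
  set S := CFC.sqrt (Mᴴ * M)
  have hcS : (((|c| : ℝ) : ℂ) • S).PosSemidef :=
    (nonneg_iff_posSemidef.mp (CFC.sqrt_nonneg _)).smul (by exact_mod_cast abs_nonneg c)
  rw [traceNorm_eq_re_trace hcS, traceNorm_eq_re_trace_sqrt]
  · simp [S, trace_smul]
  · rw [smul_mul_smul_comm, CFC.sqrt_mul_sqrt_self _ hM, conjTranspose_smul, smul_mul_smul_comm]
    congr 1
    rw [Complex.star_def, Complex.conj_ofReal]
    exact_mod_cast (abs_mul_abs_self c).symm

theorem Fl1_real_smul (c : ℝ) (M : Matrix n n ℂ) : Fl1 ((c : ℂ) • M) = |c| * Fl1 M := by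
  simp only [Fl1, Finset.mul_sum, mul_ite, mul_zero, Matrix.smul_apply, smul_eq_mul,
    Complex.im_ofReal_mul, abs_mul]

theorem Fl1_add_diagonal (M : Matrix n n ℂ) (d : n → ℂ) : Fl1 (M + diagonal d) = Fl1 M := by
  unfold Fl1
  refine Finset.sum_congr rfl fun i _ => Finset.sum_congr rfl fun j _ => ?_
  split_ifs with hij
  · rfl
  · simp [diagonal_apply_ne _ hij]

theorem FR_real_smul (c : ℝ) (M : Matrix n n ℂ) : FR ((c : ℂ) • M) = |c| * FR M := by
  rw [FR, FR, transpose_smul, ← smul_sub, traceNorm_real_smul, mul_div_assoc]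

theorem FR_add_diagonal (M : Matrix n n ℂ) (d : n → ℂ) : FR (M + diagonal d) = FR M := by
  rw [FR, FR, transpose_add, diagonal_transpose, add_sub_add_right_eq_sub]

end ImaginarityMeasures

theorem adTensor_eq_of_single_excitation {γ : ℝ} (hγ0 : 0 ≤ γ) (hγ1 : γ ≤ 1)
    {ρ : Matrix (Fin 2 × Fin 2) (Fin 2 × Fin 2) ℂ}
    (hrow : ∀ i q, ρ (i, i) q = 0) (hcol : ∀ p i, ρ p (i, i) = 0) :
    adTensor γ ρ = ((1 - γ : ℝ) : ℂ) • ρ + diagonal (Pi.single (0, 0) (γ * ρ.trace)) := by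
  have hγ : (√γ : ℂ) * √γ = γ := by
    exact_mod_cast Real.mul_self_sqrt hγ0
  have h1γ : (√(1 - γ) : ℂ) * √(1 - γ) = 1 - γ := by
    exact_mod_cast Real.mul_self_sqrt (sub_nonneg.mpr hγ1)
  ext ⟨i1, i2⟩ ⟨j1, j2⟩
  fin_cases i1 <;> fin_cases i2 <;> fin_cases j1 <;> fin_cases j2 <;>
    simp [adTensor, adKraus, mul_apply, Fintype.sum_prod_type, trace, hrow, hcol,
      mul_right_comm _ (ρ _ _), hγ, h1γ, mul_add]

theorem sqrt_mul_sqrt_half_one_add_one_sub (A : ℝ) :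
    √((1 + A) / 2) * √((1 - A) / 2) = √(1 - A ^ 2) / 2 := by
  have hmul : √((1 + A) / 2) * √((1 - A) / 2) = √((1 + A) / 2 * ((1 - A) / 2)) := by
    rcases le_total 0 (1 + A) with hA | hA
    · rw [Real.sqrt_mul (by linarith)]
    · rw [Real.sqrt_mul' _ (by linarith)]
  rw [hmul, show (1 + A) / 2 * ((1 - A) / 2) = (1 - A ^ 2) / 2 ^ 2 by ring,
    Real.sqrt_div' _ (by positivity), Real.sqrt_sq zero_le_two]

/-- Pauli `Y` on span{|01⟩, |10⟩}, extended by zero. -/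
def singleExcitationSigmaY : Matrix (Fin 2 × Fin 2) (Fin 2 × Fin 2) ℂ :=
  Complex.I • (single (1, 0) (0, 1) 1 - single (0, 1) (1, 0) 1)

theorem Fl1_singleExcitationSigmaY : Fl1 singleExcitationSigmaY = 2 := by
  norm_num [Fl1, singleExcitationSigmaY, Fintype.sum_prod_type, single_apply]

theorem traceNorm_singleExcitationSigmaY : traceNorm singleExcitationSigmaY = 2 := by
  set P : Matrix (Fin 2 × Fin 2) (Fin 2 × Fin 2) ℂ :=
    diagonal fun p => if p.1 = p.2 then 0 else 1
  have hP : P.PosSemidef := posSemidef_diagonal_iff.mpr fun p => by split_ifs <;> norm_num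
  rw [traceNorm_eq_re_trace hP]
  · norm_num [P, trace_diagonal, Fintype.sum_prod_type]
  · ext ⟨i1, i2⟩ ⟨j1, j2⟩
    fin_cases i1 <;> fin_cases i2 <;> fin_cases j1 <;> fin_cases j2 <;>
      simp [P, singleExcitationSigmaY, mul_apply, Fintype.sum_prod_type, single_apply]

theorem FR_singleExcitationSigmaY : FR singleExcitationSigmaY = 2 := by
  have h : singleExcitationSigmaY - singleExcitationSigmaYᵀ =
      ((2 : ℝ) : ℂ) • singleExcitationSigmaY := by
    rw [singleExcitationSigmaY, transpose_smul, transpose_sub, transpose_single, transpose_single]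
    module
  rw [FR, h, traceNorm_real_smul, traceNorm_singleExcitationSigmaY]
  norm_num

def dualRailDensity (A : ℝ) : Matrix (Fin 2 × Fin 2) (Fin 2 × Fin 2) ℂ :=
  vecMulVec (dualRail A) (star (dualRail A))

theorem dualRailDensity_apply_self_left (A : ℝ) (i : Fin 2) (q : Fin 2 × Fin 2) :
    dualRailDensity A (i, i) q = 0 := by
  fin_cases i <;> simp [dualRailDensity, dualRail, vecMulVec_apply]

theorem dualRailDensity_apply_self_right (A : ℝ) (p : Fin 2 × Fin 2) (i : Fin 2) :
    dualRailDensity A p (i, i) = 0 := by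
  fin_cases i <;> simp [dualRailDensity, dualRail, vecMulVec_apply]

theorem dualRailDensity_eq (A : ℝ) :
    dualRailDensity A = ((√(1 - A ^ 2) / 2 : ℝ) : ℂ) • singleExcitationSigmaY
      + diagonal (dualRailDensity A).diag := by
  have h := congrArg ((↑) : ℝ → ℂ) (sqrt_mul_sqrt_half_one_add_one_sub A)
  push_cast at h
  ext ⟨i1, i2⟩ ⟨j1, j2⟩
  fin_cases i1 <;> fin_cases i2 <;> fin_cases j1 <;> fin_cases j2 <;>
    simp [dualRailDensity, dualRail, vecMulVec_apply, singleExcitationSigmaY,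
      -Real.sqrt_div'] <;>
    linear_combination Complex.I * h

theorem Fl1_dualRailDensity (A : ℝ) : Fl1 (dualRailDensity A) = √(1 - A ^ 2) := by
  rw [dualRailDensity_eq, Fl1_add_diagonal, Fl1_real_smul, Fl1_singleExcitationSigmaY,
    abs_of_nonneg (by positivity)]
  ring

theorem FR_dualRailDensity (A : ℝ) : FR (dualRailDensity A) = √(1 - A ^ 2) := by
  rw [dualRailDensity_eq, FR_add_diagonal, FR_real_smul, FR_singleExcitationSigmaY,
    abs_of_nonneg (by positivity)]
  ring

theorem decay_dual_rail_ad_general (A γ : ℝ)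
    (hγ0 : 0 ≤ γ) (hγ1 : γ ≤ 1) :
    Fl1 (Matrix.of fun i j => dualRail A i * (starRingEnd ℂ) (dualRail A j))
      - Fl1 (adTensor γ (Matrix.of fun i j => dualRail A i * (starRingEnd ℂ) (dualRail A j)))
      = γ * Real.sqrt (1 - A ^ 2) ∧
    FR (Matrix.of fun i j => dualRail A i * (starRingEnd ℂ) (dualRail A j))
      - FR (adTensor γ (Matrix.of fun i j => dualRail A i * (starRingEnd ℂ) (dualRail A j)))
      = γ * Real.sqrt (1 - A ^ 2) := by
  change Fl1 (dualRailDensity A) - Fl1 (adTensor γ (dualRailDensity A)) = _ ∧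
    FR (dualRailDensity A) - FR (adTensor γ (dualRailDensity A)) = _
  rw [adTensor_eq_of_single_excitation hγ0 hγ1 (dualRailDensity_apply_self_left A)
      (dualRailDensity_apply_self_right A),
    Fl1_add_diagonal, Fl1_real_smul, FR_add_diagonal, FR_real_smul,
    abs_of_nonneg (sub_nonneg.mpr hγ1), Fl1_dualRailDensity, FR_dualRailDensity]
  constructor <;> ring

/-- decay of F_{l₁} and F_R for a dual-rail two-qubit state under the
amplitude damping channel. -/
theorem decay_dual_rail_ad (A γ : ℝ) (hA0 : 0 ≤ A) (hA1 : A ≤ 1)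
    (hγ0 : 0 ≤ γ) (hγ1 : γ ≤ 1) :
    Fl1 (Matrix.of fun i j => dualRail A i * (starRingEnd ℂ) (dualRail A j))
      - Fl1 (adTensor γ (Matrix.of fun i j => dualRail A i * (starRingEnd ℂ) (dualRail A j)))
      = γ * Real.sqrt (1 - A ^ 2) ∧
    FR (Matrix.of fun i j => dualRail A i * (starRingEnd ℂ) (dualRail A j))
      - FR (adTensor γ (Matrix.of fun i j => dualRail A i * (starRingEnd ℂ) (dualRail A j)))
      = γ * Real.sqrt (1 - A ^ 2) :=
  decay_dual_rail_ad_general A γ hγ0 hγ1
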